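/- arXiv:2504.20806 — 5 statements merged into one kernel-verified Lean document; each statement's English description precedes it below -/
import Mathlib

section
/- Let X and Y be geodesic metric spaces and f : X → Y a weakly H-quasisymmetric homeomorphism. Then for all distinct x,a,b ∈ X with t = d_X(x,a)/d_X(x,b) ≥ 1 (or any t > 0), one has d_Y(f(x),f(a)) ≤ (t+1)·H^{t+1}·d_Y(f(x),f(b)). -/
/-!
Cut a geodesic from `x` to `a` into `n = ⌈t⌉` pieces of length `d(x,a)/n ≤ d(x,b)`. Weak
quasisymmetry bounds the image of the first piece by `H·d(f x, f b)`, and the image of each further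
piece by `H` times the image of the previous one, since consecutive pieces have equal length. The
`n` image pieces thus have length at most `Hⁿ·d(f x, f b)` each, and the triangle inequality gives
`d(f x, f a) ≤ n·Hⁿ·d(f x, f b) ≤ (t+1)·H^(t+1)·d(f x, f b)`.
-/

open Finset

def IsGeodesicSpace (X : Type*) [MetricSpace X] : Prop :=
  ∀ x y : X, ∃ γ : ℝ → X, γ 0 = x ∧ γ (dist x y) = y ∧
    ∀ s ∈ Set.Icc (0 : ℝ) (dist x y), ∀ t ∈ Set.Icc (0 : ℝ) (dist x y),
      dist (γ s) (γ t) = |s - t|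

def IsWeaklyQuasisymmetric {X Y : Type*} [PseudoMetricSpace X] [PseudoMetricSpace Y]
    (H : ℝ) (g : X → Y) : Prop :=
  ∀ x y z : X, dist x y ≤ dist x z → dist (g x) (g y) ≤ H * dist (g x) (g z)

theorem IsGeodesicSpace.exists_equally_spaced {X : Type*} [MetricSpace X]
    (hX : IsGeodesicSpace X) (x a : X) {n : ℕ} (hn : 0 < n) :
    ∃ p : ℕ → X, p 0 = x ∧ p n = a ∧ ∀ i < n, dist (p i) (p (i + 1)) = dist x a / n := by
  obtain ⟨γ, hγ0, hγa, hγ⟩ := hX x a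
  have hn' : (0 : ℝ) < n := by exact_mod_cast hn
  have hmem : ∀ i ≤ n, (i : ℝ) * (dist x a / n) ∈ Set.Icc 0 (dist x a) := by
    intro i hi
    refine ⟨by positivity, ?_⟩
    calc (i : ℝ) * (dist x a / n) ≤ n * (dist x a / n) := by gcongr
      _ = dist x a := by field_simp
  refine ⟨fun i => γ (i * (dist x a / n)), by simpa using hγ0, ?_, fun i hi => ?_⟩
  · simpa [mul_div_cancel₀ _ hn'.ne'] using hγa
  · rw [hγ _ (hmem i hi.le) _ (hmem (i + 1) hi), ← sub_mul, abs_mul,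
      abs_of_nonneg (by positivity : 0 ≤ dist x a / n)]
    simp

namespace IsWeaklyQuasisymmetric

variable {X Y : Type*} [PseudoMetricSpace X] [PseudoMetricSpace Y] {H : ℝ} {g : X → Y}

theorem dist_step_le_pow (hg : IsWeaklyQuasisymmetric H g) (hH : 0 ≤ H) {p : ℕ → X} {n : ℕ}
    {s : ℝ} {b : X} (hstep : ∀ i < n, dist (p i) (p (i + 1)) = s) (hsb : s ≤ dist (p 0) b) :
    ∀ i < n, dist (g (p i)) (g (p (i + 1))) ≤ H ^ (i + 1) * dist (g (p 0)) (g b) := by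
  intro i
  induction i with
  | zero =>
    intro hn
    simpa using hg _ _ _ ((hstep 0 hn).trans_le hsb)
  | succ i ih =>
    intro hi
    have hsame : dist (p (i + 1)) (p (i + 2)) ≤ dist (p (i + 1)) (p i) := by
      rw [hstep _ hi, dist_comm, hstep _ (by omega)]
    calc dist (g (p (i + 1))) (g (p (i + 2)))
        ≤ H * dist (g (p (i + 1))) (g (p i)) := hg _ _ _ hsame
      _ ≤ H * (H ^ (i + 1) * dist (g (p 0)) (g b)) := by
        rw [dist_comm]; gcongr; exact ih (by omega)
      _ = H ^ (i + 2) * dist (g (p 0)) (g b) := by ring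

theorem dist_le_of_equally_spaced (hg : IsWeaklyQuasisymmetric H g) (hH : 1 ≤ H)
    {p : ℕ → X} {n : ℕ} {s : ℝ} {b : X} (hstep : ∀ i < n, dist (p i) (p (i + 1)) = s)
    (hsb : s ≤ dist (p 0) b) :
    dist (g (p 0)) (g (p n)) ≤ n * H ^ n * dist (g (p 0)) (g b) := by
  have hpiece : ∀ i ∈ range n, dist (g (p i)) (g (p (i + 1))) ≤ H ^ n * dist (g (p 0)) (g b) :=
    fun i hi => (hg.dist_step_le_pow (by linarith) hstep hsb i (mem_range.mp hi)).trans
      (by gcongr; exact mem_range.mp hi)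
  calc dist (g (p 0)) (g (p n)) ≤ ∑ i ∈ range n, dist (g (p i)) (g (p (i + 1))) :=
        dist_le_range_sum_dist (g ∘ p) n
    _ ≤ n * (H ^ n * dist (g (p 0)) (g b)) := by
        simpa using sum_le_card_nsmul _ _ _ hpiece
    _ = n * H ^ n * dist (g (p 0)) (g b) := by ring

end IsWeaklyQuasisymmetric

theorem IsWeaklyQuasisymmetric.dist_le_of_isGeodesicSpace {X Y : Type*} [MetricSpace X]
    [PseudoMetricSpace Y] (hX : IsGeodesicSpace X) {H : ℝ} {g : X → Y}
    (hg : IsWeaklyQuasisymmetric H g) (hH : 1 ≤ H) {x a b : X} {n : ℕ} (hn : 0 < n)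
    (hxa : dist x a ≤ n * dist x b) :
    dist (g x) (g a) ≤ n * H ^ n * dist (g x) (g b) := by
  obtain ⟨p, hp0, hpn, hstep⟩ := hX.exists_equally_spaced x a hn
  have hsb : dist x a / n ≤ dist (p 0) b := by
    rw [hp0, div_le_iff₀ (by exact_mod_cast hn), mul_comm]
    exact hxa
  simpa [hp0, hpn] using hg.dist_le_of_equally_spaced hH hstep hsb

theorem natCast_mul_pow_le_mul_rpow {H t : ℝ} (hH : 1 ≤ H) {n : ℕ} (hn : (n : ℝ) ≤ t + 1) :
    n * H ^ n ≤ (t + 1) * H ^ (t + 1) := by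
  have hpow : H ^ n ≤ H ^ (t + 1) := by
    rw [← Real.rpow_natCast]
    exact Real.rpow_le_rpow_of_exponent_le hH hn
  gcongr
  exact (Nat.cast_nonneg n).trans hn

theorem weakly_qs_ratio_upper_bound_general {X Y : Type*} [MetricSpace X] [MetricSpace Y]
    (hX : IsGeodesicSpace X)
    (f : X ≃ₜ Y) (H : ℝ) (hH : 1 ≤ H)
    (hwqs : ∀ x y z : X, dist x y ≤ dist x z →
      dist (f x) (f y) ≤ H * dist (f x) (f z)) :
    ∀ x a b : X, x ≠ a → x ≠ b → a ≠ b →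
      dist (f x) (f a) ≤
        (dist x a / dist x b + 1) * H ^ (dist x a / dist x b + 1) * dist (f x) (f b) := by
  intro x a b hxa hxb _
  set t := dist x a / dist x b
  have ht : 0 < t := div_pos (dist_pos.mpr hxa) (dist_pos.mpr hxb)
  have hsplit : dist x a ≤ ⌈t⌉₊ * dist x b :=
    (div_le_iff₀ (dist_pos.mpr hxb)).mp (Nat.le_ceil t)
  calc dist (f x) (f a) ≤ ⌈t⌉₊ * H ^ ⌈t⌉₊ * dist (f x) (f b) :=
        IsWeaklyQuasisymmetric.dist_le_of_isGeodesicSpace hX hwqs hH (Nat.ceil_pos.mpr ht) hsplit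
    _ ≤ (t + 1) * H ^ (t + 1) * dist (f x) (f b) :=
        mul_le_mul_of_nonneg_right
          (natCast_mul_pow_le_mul_rpow hH (Nat.ceil_lt_add_one ht.le).le) dist_nonneg

/-- Upper-bound half of Theorem 3.3: for a weakly `H`-quasisymmetric homeomorphism
between geodesic spaces, with `t = d(x,a)/d(x,b)`, one has
`d(f x, f a) ≤ (t+1)·H^(t+1)·d(f x, f b)`. -/
theorem weakly_qs_ratio_upper_bound {X Y : Type*} [MetricSpace X] [MetricSpace Y]
    (hX : IsGeodesicSpace X) (hY : IsGeodesicSpace Y)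
    (f : X ≃ₜ Y) (H : ℝ) (hH : 1 ≤ H)
    (hwqs : ∀ x y z : X, dist x y ≤ dist x z →
      dist (f x) (f y) ≤ H * dist (f x) (f z)) :
    ∀ x a b : X, x ≠ a → x ≠ b → a ≠ b →
      dist (f x) (f a) ≤
        (dist x a / dist x b + 1) * H ^ (dist x a / dist x b + 1) * dist (f x) (f b) :=
  weakly_qs_ratio_upper_bound_general hX f H hH hwqs
end

section
/- Let X be a metric space, x, a, b ∈ X with a ≠ x, and suppose points b_0 = b, …, b_{s-1} satisfy d(b_i, x) = 3^{-i}·d(b,x), and s ≥ 2 is such that 3^{-s}·d(b,x) ≤ d(a,x) ≤ 3^{-(s-1)}·d(b,x). Then for all 0 ≤ i < j ≤ s−1, d(b_j, a) ≤ d(b_i, b_j). -/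
theorem dist_le_dist_of_three_mul_dist_le {X : Type*} [PseudoMetricSpace X] {p q a x : X}
    (hax : dist a x ≤ dist p x) (hpq : 3 * dist p x ≤ dist q x) : dist p a ≤ dist q p :=
  calc dist p a ≤ dist p x + dist a x := dist_triangle_right p a x
    _ ≤ dist q x - dist p x := by linarith
    _ ≤ dist q p := by linarith [dist_triangle q p x]

theorem three_mul_inv_three_pow_le {i j : ℕ} (hij : i < j) :
    3 * (3 : ℝ)⁻¹ ^ j ≤ (3 : ℝ)⁻¹ ^ i := by
  obtain ⟨k, rfl⟩ := Nat.exists_eq_add_of_lt hij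
  calc 3 * (3 : ℝ)⁻¹ ^ (i + k + 1) = (3 : ℝ)⁻¹ ^ i * (3 : ℝ)⁻¹ ^ k := by ring
    _ ≤ (3 : ℝ)⁻¹ ^ i :=
      mul_le_of_le_one_right (by positivity) (pow_le_one₀ (by norm_num) (by norm_num))

theorem dist_to_target_le_dist_chain_general {X : Type*} [MetricSpace X]
    (b x a : X) (s : ℕ) (bb : ℕ → X)
    (hdist : ∀ i < s, dist (bb i) x = (3 : ℝ)⁻¹ ^ i * dist b x)
    (hhigh : dist a x ≤ (3 : ℝ)⁻¹ ^ (s - 1) * dist b x) :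
    ∀ i j : ℕ, i < j → j < s → dist (bb j) a ≤ dist (bb i) (bb j) := by
  intro i j hij hjs
  apply dist_le_dist_of_three_mul_dist_le
  · calc dist a x ≤ (3 : ℝ)⁻¹ ^ (s - 1) * dist b x := hhigh
      _ ≤ (3 : ℝ)⁻¹ ^ j * dist b x :=
        mul_le_mul_of_nonneg_right (pow_le_pow_of_le_one (by norm_num) (by norm_num) (by omega))
          dist_nonneg
      _ = dist (bb j) x := (hdist j hjs).symm
  · rw [hdist i (hij.trans hjs), hdist j hjs, ← mul_assoc]
    gcongr
    exact three_mul_inv_three_pow_le hij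

/-- Inequality (3.3.5): with `d(b_i,x) = 3^{-i}·d(b,x)` and
`3^{-s}·d(b,x) ≤ d(a,x) ≤ 3^{-(s-1)}·d(b,x)`, for `i < j ≤ s-1` one has
`d(b_j, a) ≤ d(b_i, b_j)`. -/
theorem dist_to_target_le_dist_chain {X : Type*} [MetricSpace X]
    (b x a : X) (hax : a ≠ x) (s : ℕ) (hs : 2 ≤ s) (bb : ℕ → X) (hb0 : bb 0 = b)
    (hdist : ∀ i < s, dist (bb i) x = (3 : ℝ)⁻¹ ^ i * dist b x)
    (hlow : (3 : ℝ)⁻¹ ^ s * dist b x ≤ dist a x)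
    (hhigh : dist a x ≤ (3 : ℝ)⁻¹ ^ (s - 1) * dist b x) :
    ∀ i j : ℕ, i < j → j < s → dist (bb j) a ≤ dist (bb i) (bb j) :=
  dist_to_target_le_dist_chain_general b x a s bb hdist hhigh
end

section
/- Let X be a metric space, Y a metric space, f : X → Y uniformly continuous, and suppose there is a family G of self-maps of X and a constant c ≥ 1, μ ∈ (0,1] with d(A(u),A(v)) ≤ c·max{d(u,v), d(u,v)^μ} for all A ∈ G and u,v ∈ X. If x_0, u ∈ X are joined by a chain x_0 = y_0, y_1, …, y_m = u with d(y_{i−1}, y_i) < (δ/(Tc))^{1/μ} for all i (where δ comes from uniform continuity at ε = 1 and T ≥ 1 with δ < Tc), then sup_{A ∈ G} d_Y(f(A(u)), f(A(x_0))) ≤ m. -/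
/-! A chain step of length `d < q ^ (1 / μ)` with `q ≤ 1` satisfies `d ≤ 1`, so `d ≤ d ^ μ`
and the distortion bound turns it into an image step of length `< c q = δ / T ≤ δ`;
uniform continuity then moves `f ∘ A` by less than `1` per step, and the triangle
inequality along the `m` steps gives the bound `m`. -/

lemma dist_apply_lt_of_dist_lt_rpow_inv {X : Type*} [PseudoMetricSpace X] {A : X → X}
    {c μ q : ℝ} (hA : ∀ u v : X, dist (A u) (A v) ≤ c * max (dist u v) (dist u v ^ μ))
    (hc : 0 < c) (hμ0 : 0 < μ) (hμ1 : μ ≤ 1) (hq0 : 0 ≤ q) (hq1 : q ≤ 1) {u v : X}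
    (huv : dist u v < q ^ (1 / μ)) : dist (A u) (A v) < c * q := by
  have hpow : dist u v ^ μ < q := by
    rwa [one_div, Real.lt_rpow_inv_iff_of_pos dist_nonneg hq0 hμ0] at huv
  have hle_one : dist u v ≤ 1 :=
    huv.le.trans (Real.rpow_le_one hq0 hq1 (by positivity))
  calc dist (A u) (A v) ≤ c * max (dist u v) (dist u v ^ μ) := hA u v
    _ = c * dist u v ^ μ := by
      rw [max_eq_right (Real.self_le_rpow_of_le_one dist_nonneg hle_one hμ1)]
    _ < c * q := mul_lt_mul_of_pos_left hpow hc

/-- Boundedness-of-orbits argument from Theorem 1.2(ii): uniform continuity of `f`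
plus uniform distortion control on the family `G` bounds `d(f(A u), f(A x₀))` by the
length `m` of a fine chain joining `x₀` to `u`. -/
theorem orbit_bound_of_uniform_continuity {X Y : Type*} [MetricSpace X] [MetricSpace Y]
    (f : X → Y) (G : Set (X → X)) (c μ δ T : ℝ)
    (hc : 1 ≤ c) (hμ0 : 0 < μ) (hμ1 : μ ≤ 1)
    (hG : ∀ A ∈ G, ∀ u v : X,
      dist (A u) (A v) ≤ c * max (dist u v) (dist u v ^ μ))
    (hδ : 0 < δ)
    (huc : ∀ x y : X, dist x y < δ → dist (f x) (f y) < 1)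
    (hT : 1 ≤ T) (hδT : δ < T * c)
    (x₀ u : X) (m : ℕ) (y : ℕ → X) (hy0 : y 0 = x₀) (hym : y m = u)
    (hchain : ∀ i : ℕ, 1 ≤ i → i ≤ m →
      dist (y (i - 1)) (y i) < (δ / (T * c)) ^ (1 / μ)) :
    ∀ A ∈ G, dist (f (A u)) (f (A x₀)) ≤ m := by
  intro A hA
  have hc0 : 0 < c := by linarith
  have hq0 : 0 ≤ δ / (T * c) := by positivity
  have hq1 : δ / (T * c) ≤ 1 := ((div_lt_one (by positivity)).2 hδT).le
  have hcq : c * (δ / (T * c)) ≤ δ :=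
    calc c * (δ / (T * c)) = δ / T := by field_simp
      _ ≤ δ := div_le_self hδ.le hT
  have hstep : ∀ {i}, i < m → dist (f (A (y i))) (f (A (y (i + 1)))) ≤ 1 := by
    intro i hi
    have hlink := hchain (i + 1) (Nat.le_add_left 1 i) hi
    rw [Nat.add_sub_cancel] at hlink
    exact (huc _ _ ((dist_apply_lt_of_dist_lt_rpow_inv (hG A hA) hc0 hμ0 hμ1 hq0 hq1
      hlink).trans_le hcq)).le
  have hsum := dist_le_range_sum_of_dist_le (f := fun i => f (A (y i))) m hstep
  rw [dist_comm, ← hy0, ← hym]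
  simpa using hsum
end

section
/- Let F ⊆ C(X,Y) be a family of continuous maps between metric spaces that is uniformly ω-continuous on every compact subset of X, where X is locally compact. Then F is locally uniformly ω-continuous: for each x_0 ∈ X there exist r, L > 0 such that d_Y(f(x),f(y)) ≤ L·ω(d_X(x,y)) for all x, y ∈ B(x_0, r) and all f ∈ F. Conversely, if F is locally uniformly ω-continuous and X is a length (or geodesic) space, then F is uniformly ω-continuous on compact sets. -/
open Metric Filter Topology

section Modulus

variable {X Y : Type*} [PseudoMetricSpace X] [PseudoMetricSpace Y]

def UniformlyOmegaContinuousOn (F : Set (X → Y)) (ω : ℝ → ℝ) (s : Set X) : Prop :=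
  ∃ L > (0 : ℝ), ∀ f ∈ F, ∀ x ∈ s, ∀ y ∈ s, dist (f x) (f y) ≤ L * ω (dist x y)

variable {F : Set (X → Y)} {ω : ℝ → ℝ}

theorem UniformlyOmegaContinuousOn.mono {s t : Set X} (h : UniformlyOmegaContinuousOn F ω t)
    (hst : s ⊆ t) : UniformlyOmegaContinuousOn F ω s :=
  let ⟨L, hL, hLt⟩ := h
  ⟨L, hL, fun f hf x hx y hy => hLt f hf x (hst hx) y (hst hy)⟩

theorem exists_ball_uniformlyOmegaContinuousOn [LocallyCompactSpace X]
    (h : ∀ E : Set X, IsCompact E → UniformlyOmegaContinuousOn F ω E) (x₀ : X) :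
    ∃ r > (0 : ℝ), UniformlyOmegaContinuousOn F ω (ball x₀ r) := by
  obtain ⟨K, hK, hKx₀⟩ := exists_compact_mem_nhds x₀
  obtain ⟨r, hr, hrK⟩ := Metric.mem_nhds_iff.1 hKx₀
  exact ⟨r, hr, (h K hK).mono hrK⟩

theorem IsCompact.exists_pos_forall_dist_lt_le_mul (hω : ∀ t, 0 ≤ t → 0 ≤ ω t)
    (hloc : ∀ x₀ : X, ∃ r > (0 : ℝ), UniformlyOmegaContinuousOn F ω (ball x₀ r))
    {E : Set X} (hE : IsCompact E) :
    ∃ δ > (0 : ℝ), ∃ L > (0 : ℝ), ∀ f ∈ F, ∀ x ∈ E, ∀ y, dist x y < δ →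
      dist (f x) (f y) ≤ L * ω (dist x y) := by
  refine hE.induction_on ⟨1, one_pos, 1, one_pos, by simp⟩ ?_ ?_ ?_
  · rintro s t hst ⟨δ, hδ, L, hL, h⟩
    exact ⟨δ, hδ, L, hL, fun f hf x hx => h f hf x (hst hx)⟩
  · rintro s t ⟨δ₁, hδ₁, L₁, hL₁, h₁⟩ ⟨δ₂, hδ₂, L₂, hL₂, h₂⟩
    refine ⟨min δ₁ δ₂, lt_min hδ₁ hδ₂, max L₁ L₂, lt_max_of_lt_left hL₁, ?_⟩
    rintro f hf x (hx | hx) y hxy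
    · exact (h₁ f hf x hx y (hxy.trans_le (min_le_left _ _))).trans
        (mul_le_mul_of_nonneg_right (le_max_left _ _) (hω _ dist_nonneg))
    · exact (h₂ f hf x hx y (hxy.trans_le (min_le_right _ _))).trans
        (mul_le_mul_of_nonneg_right (le_max_right _ _) (hω _ dist_nonneg))
  · intro z _
    obtain ⟨r, hr, L, hL, h⟩ := hloc z
    refine ⟨ball z (r / 2), mem_nhdsWithin_of_mem_nhds (ball_mem_nhds z (half_pos hr)),
      r / 2, half_pos hr, L, hL, fun f hf x hx y hxy => h f hf x ?_ y ?_⟩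
    · exact ball_subset_ball (half_le_self hr.le) hx
    · rw [mem_ball] at hx ⊢
      linarith [dist_triangle_left y z x]

end Modulus

section Chaining

variable {X Y : Type*} [TopologicalSpace X] [PreconnectedSpace X] [PseudoMetricSpace Y]

theorem exists_forall_dist_le_mul_of_preconnectedSpace {F : Set (X → Y)} {c : ℝ}
    (hloc : ∀ z, ∃ C, ∀ᶠ u in 𝓝 z, ∀ f ∈ F, dist (f z) (f u) ≤ C * c) (x y : X) :
    ∃ M, ∀ f ∈ F, dist (f x) (f y) ≤ M * c := by
  have htrans : IsTrans X fun x y => ∃ M, ∀ f ∈ F, dist (f x) (f y) ≤ M * c :=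
    ⟨fun x y z ⟨M₁, h₁⟩ ⟨M₂, h₂⟩ => ⟨M₁ + M₂, fun f hf =>
      (dist_triangle _ (f y) _).trans ((add_le_add (h₁ f hf) (h₂ f hf)).trans_eq (add_mul ..).symm)⟩⟩
  refine PreconnectedSpace.induction₂' _ (fun z => ?_) htrans x y
  obtain ⟨C, hC⟩ := hloc z
  filter_upwards [hC] with u hu
  exact ⟨⟨C, hu⟩, C, fun f hf => (dist_comm (f u) (f z)).trans_le (hu f hf)⟩

theorem IsCompact.exists_forall_dist_le_mul_of_preconnectedSpace {F : Set (X → Y)} {c : ℝ}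
    (hc : 0 ≤ c) (hloc : ∀ z, ∃ C, ∀ᶠ u in 𝓝 z, ∀ f ∈ F, dist (f z) (f u) ≤ C * c)
    {E : Set X} (hE : IsCompact E) (x₀ : X) :
    ∃ M, ∀ f ∈ F, ∀ x ∈ E, dist (f x₀) (f x) ≤ M * c := by
  refine hE.induction_on ⟨0, by simp⟩ ?_ ?_ ?_
  · rintro s t hst ⟨M, h⟩
    exact ⟨M, fun f hf x hx => h f hf x (hst hx)⟩
  · rintro s t ⟨M₁, h₁⟩ ⟨M₂, h₂⟩
    refine ⟨max M₁ M₂, ?_⟩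
    rintro f hf x (hx | hx)
    · exact (h₁ f hf x hx).trans (mul_le_mul_of_nonneg_right (le_max_left _ _) hc)
    · exact (h₂ f hf x hx).trans (mul_le_mul_of_nonneg_right (le_max_right _ _) hc)
  · intro z _
    obtain ⟨M, hM⟩ := _root_.exists_forall_dist_le_mul_of_preconnectedSpace hloc x₀ z
    obtain ⟨C, hC⟩ := hloc z
    refine ⟨_, mem_nhdsWithin_of_mem_nhds hC, M + C, fun f hf u hu => ?_⟩
    calc dist (f x₀) (f u) ≤ dist (f x₀) (f z) + dist (f z) (f u) := dist_triangle _ _ _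
      _ ≤ M * c + C * c := add_le_add (hM f hf) (hu f hf)
      _ = (M + C) * c := (add_mul ..).symm

end Chaining

theorem IsGeodesicSpace.preconnectedSpace {X : Type*} [MetricSpace X] (hX : IsGeodesicSpace X) :
    PreconnectedSpace X := by
  refine ⟨isPreconnected_of_forall_pair fun x _ y _ => ?_⟩
  obtain ⟨γ, hγx, hγy, hγ⟩ := hX x y
  have hγcont : ContinuousOn γ (Set.Icc 0 (dist x y)) :=
    (LipschitzOnWith.mk_one fun s hs t ht => (hγ s hs t ht).le).continuousOn
  refine ⟨γ '' Set.Icc 0 (dist x y), Set.subset_univ _, ⟨0, ?_, hγx⟩, ⟨dist x y, ?_, hγy⟩,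
    isPreconnected_Icc.image γ hγcont⟩
  · exact Set.left_mem_Icc.2 dist_nonneg
  · exact Set.right_mem_Icc.2 dist_nonneg

theorem uniformlyOmegaContinuousOn_of_isCompact {X Y : Type*} [PseudoMetricSpace X] [PreconnectedSpace X]
    [PseudoMetricSpace Y] {F : Set (X → Y)} {ω : ℝ → ℝ} (hωmono : Monotone ω) (hω0 : ω 0 = 0)
    (hloc : ∀ x₀ : X, ∃ r > (0 : ℝ), UniformlyOmegaContinuousOn F ω (ball x₀ r))
    {E : Set X} (hE : IsCompact E) : UniformlyOmegaContinuousOn F ω E := by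
  have hω : ∀ t, 0 ≤ t → 0 ≤ ω t := fun t ht => hω0 ▸ hωmono ht
  obtain ⟨δ, hδ, L, hL, hnear⟩ := hE.exists_pos_forall_dist_lt_le_mul hω hloc
  have hlocδ : ∀ z, ∃ C, ∀ᶠ u in 𝓝 z, ∀ f ∈ F, dist (f z) (f u) ≤ C * ω δ := by
    intro z
    obtain ⟨r, hr, C, hCpos, hC⟩ := hloc z
    refine ⟨C, ?_⟩
    filter_upwards [ball_mem_nhds z (lt_min hr hδ)] with u hu f hf
    have hu' : dist z u < min r δ := by rwa [mem_ball, dist_comm] at hu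
    exact (hC f hf z (mem_ball_self hr) u (mem_ball'.2 (hu'.trans_le (min_le_left _ _)))).trans
      (mul_le_mul_of_nonneg_left (hωmono (hu'.le.trans (min_le_right _ _))) hCpos.le)
  rcases E.eq_empty_or_nonempty with rfl | ⟨x₀, -⟩
  · exact ⟨1, one_pos, by simp⟩
  obtain ⟨M, hM⟩ := hE.exists_forall_dist_le_mul_of_preconnectedSpace (hω δ hδ.le) hlocδ x₀
  refine ⟨max L (2 * M), lt_max_of_lt_left hL, fun f hf x hx y hy => ?_⟩
  rcases lt_or_ge (dist x y) δ with hxy | hxy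
  · exact (hnear f hf x hx y hxy).trans
      (mul_le_mul_of_nonneg_right (le_max_left _ _) (hω _ dist_nonneg))
  · calc dist (f x) (f y) ≤ dist (f x₀) (f x) + dist (f x₀) (f y) := dist_triangle_left _ _ _
      _ ≤ M * ω δ + M * ω δ := add_le_add (hM f hf x hx) (hM f hf y hy)
      _ = 2 * M * ω δ := by ring
      _ ≤ max L (2 * M) * ω (dist x y) :=
        mul_le_mul (le_max_right _ _) (hωmono hxy) (hω δ hδ.le) (hL.le.trans (le_max_left _ _))

theorem uniformly_omega_continuous_compact_iff_locally_general {X Y : Type*}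
    [MetricSpace X] [MetricSpace Y] [LocallyCompactSpace X]
    (F : Set (X → Y))
    (ω : ℝ → ℝ) (hωmono : Monotone ω) (hω0 : ω 0 = 0) :
    ((∀ E : Set X, IsCompact E → ∃ L > (0 : ℝ), ∀ f ∈ F, ∀ x ∈ E, ∀ y ∈ E,
        dist (f x) (f y) ≤ L * ω (dist x y)) →
      ∀ x₀ : X, ∃ r > (0 : ℝ), ∃ L > (0 : ℝ), ∀ f ∈ F,
        ∀ x ∈ Metric.ball x₀ r, ∀ y ∈ Metric.ball x₀ r,
          dist (f x) (f y) ≤ L * ω (dist x y)) ∧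
    (IsGeodesicSpace X →
      (∀ x₀ : X, ∃ r > (0 : ℝ), ∃ L > (0 : ℝ), ∀ f ∈ F,
        ∀ x ∈ Metric.ball x₀ r, ∀ y ∈ Metric.ball x₀ r,
          dist (f x) (f y) ≤ L * ω (dist x y)) →
      ∀ E : Set X, IsCompact E → ∃ L > (0 : ℝ), ∀ f ∈ F, ∀ x ∈ E, ∀ y ∈ E,
        dist (f x) (f y) ≤ L * ω (dist x y)) := by
  refine ⟨exists_ball_uniformlyOmegaContinuousOn, fun hX hloc E hE => ?_⟩
  have := hX.preconnectedSpace
  exact uniformlyOmegaContinuousOn_of_isCompact hωmono hω0 hloc hE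

/-- Proposition 2.6 of Fletcher–Nicks: for a family of continuous maps on a locally
compact space, uniform ω-continuity on compact sets implies local uniform
ω-continuity; and conversely on a geodesic space. -/
theorem uniformly_omega_continuous_compact_iff_locally {X Y : Type*}
    [MetricSpace X] [MetricSpace Y] [LocallyCompactSpace X]
    (F : Set (X → Y)) (hF : ∀ f ∈ F, Continuous f)
    (ω : ℝ → ℝ) (hωcont : Continuous ω) (hωmono : Monotone ω) (hω0 : ω 0 = 0) :
    ((∀ E : Set X, IsCompact E → ∃ L > (0 : ℝ), ∀ f ∈ F, ∀ x ∈ E, ∀ y ∈ E,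
        dist (f x) (f y) ≤ L * ω (dist x y)) →
      ∀ x₀ : X, ∃ r > (0 : ℝ), ∃ L > (0 : ℝ), ∀ f ∈ F,
        ∀ x ∈ Metric.ball x₀ r, ∀ y ∈ Metric.ball x₀ r,
          dist (f x) (f y) ≤ L * ω (dist x y)) ∧
    (IsGeodesicSpace X →
      (∀ x₀ : X, ∃ r > (0 : ℝ), ∃ L > (0 : ℝ), ∀ f ∈ F,
        ∀ x ∈ Metric.ball x₀ r, ∀ y ∈ Metric.ball x₀ r,
          dist (f x) (f y) ≤ L * ω (dist x y)) →
      ∀ E : Set X, IsCompact E → ∃ L > (0 : ℝ), ∀ f ∈ F, ∀ x ∈ E, ∀ y ∈ E,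
        dist (f x) (f y) ≤ L * ω (dist x y)) :=
  uniformly_omega_continuous_compact_iff_locally_general F ω hωmono hω0
end

section
/- Let (X, d_X) be a metric space, G a family of bijective self-maps of X such that both A and A^{-1} satisfy d_X(A(u),A(v)) ≤ c·max{d_X(u,v), d_X(u,v)^μ} (c ≥ 1, 0 < μ ≤ 1), and let f : X → Y satisfy: there exist r_0 > 0, x_0 ∈ X, L > 0, α ∈ (0,1] with d_Y(f(A(u)), f(A(v))) ≤ L·d_X(u,v)^α for all A ∈ G and u, v ∈ B(x_0, r_0), and suppose G acts transitively on X. Then f is uniformly continuous: for every ε > 0 there is δ > 0 such that d_X(x,y) < δ implies d_Y(f(x),f(y)) < ε; explicitly δ < min{r_0/(2c), (r_0/(2c))^{1/μ}, (ε/(L c^α))^{1/α}, (ε/(L c^α))^{1/(αμ)}} works. -/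
/-!
Given `x`, choose `A ∈ G` with `A x₀ = x` and pull `y` back to `v = A⁻¹ y`. The distortion
bound for `A⁻¹` gives `d(x₀, v) ≤ c · max{d(x,y), d(x,y)^μ}`, which the first two terms of the
minimum make smaller than `r₀ / 2`; so `v` lies in the ball where `f ∘ A` is Hölder, and
`d(f x, f y) = d(f (A x₀), f (A v)) ≤ L · d(x₀, v)^α`, which the last two terms make `< ε`.
-/

open Metric

lemma Real.max_self_rpow_lt_of_lt_min {d s μ : ℝ} (hd : 0 ≤ d) (hs : 0 < s) (hμ : 0 < μ)
    (h : d < min s (s ^ (1 / μ))) : max d (d ^ μ) < s :=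
  max_lt (h.trans_le (min_le_left _ _))
    ((Real.lt_rpow_inv_iff_of_pos hd hs.le hμ).1 (one_div μ ▸ h.trans_le (min_le_right _ _)))

section

variable {X Y : Type*} [MetricSpace X] [MetricSpace Y]

lemma dist_le_of_transitive_of_holderOn_ball {f : X → Y} {G : Set (X ≃ X)} {ω : ℝ → ℝ}
    {r₀ L α : ℝ} {x₀ : X} (hL : 0 ≤ L) (hα : 0 ≤ α)
    (hsymm : ∀ A ∈ G, ∀ u v : X, dist (A.symm u) (A.symm v) ≤ ω (dist u v))
    (hHolder : ∀ A ∈ G, ∀ u ∈ ball x₀ r₀, ∀ v ∈ ball x₀ r₀,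
      dist (f (A u)) (f (A v)) ≤ L * dist u v ^ α)
    (htrans : ∀ x : X, ∃ A ∈ G, A x₀ = x) {x y : X} (hxy : ω (dist x y) < r₀) :
    dist (f x) (f y) ≤ L * ω (dist x y) ^ α := by
  obtain ⟨A, hA, rfl⟩ := htrans x
  have hpull : dist x₀ (A.symm y) ≤ ω (dist (A x₀) y) := by
    simpa using hsymm A hA (A x₀) y
  have hv : A.symm y ∈ ball x₀ r₀ := mem_ball_comm.1 (hpull.trans_lt hxy)
  calc dist (f (A x₀)) (f y) = dist (f (A x₀)) (f (A (A.symm y))) := by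
        rw [A.apply_symm_apply]
    _ ≤ L * dist x₀ (A.symm y) ^ α := hHolder A hA x₀ (mem_ball_self (pos_of_mem_ball hv)) _ hv
    _ ≤ L * ω (dist (A x₀) y) ^ α := by gcongr

lemma dist_lt_of_dist_lt_transitive_holder_modulus {f : X → Y} {G : Set (X ≃ X)}
    {c μ r₀ L α ε δ : ℝ} {x₀ : X} (hc : 0 < c) (hμ : 0 < μ) (hr₀ : 0 < r₀) (hL : 0 < L)
    (hα : 0 < α) (hε : 0 < ε)
    (hsymm : ∀ A ∈ G, ∀ u v : X, dist (A.symm u) (A.symm v) ≤ c * max (dist u v) (dist u v ^ μ))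
    (hHolder : ∀ A ∈ G, ∀ u ∈ ball x₀ r₀, ∀ v ∈ ball x₀ r₀,
      dist (f (A u)) (f (A v)) ≤ L * dist u v ^ α)
    (htrans : ∀ x : X, ∃ A ∈ G, A x₀ = x)
    (hδ : δ < min (min (r₀ / (2 * c)) ((r₀ / (2 * c)) ^ (1 / μ)))
      (min ((ε / (L * c ^ α)) ^ (1 / α)) ((ε / (L * c ^ α)) ^ (1 / (α * μ)))))
    {x y : X} (hxy : dist x y < δ) : dist (f x) (f y) < ε := by
  set d := dist x y
  set T := ε / (L * c ^ α)
  have hT : 0 < T := by positivity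
  have hrad : max d (d ^ μ) < r₀ / (2 * c) :=
    Real.max_self_rpow_lt_of_lt_min dist_nonneg (by positivity) hμ
      (hxy.trans_le (hδ.le.trans (min_le_left _ _)))
  have hval : max d (d ^ μ) < T ^ (1 / α) := by
    refine Real.max_self_rpow_lt_of_lt_min dist_nonneg (by positivity) hμ ?_
    rw [← Real.rpow_mul hT.le, one_div_mul_one_div]
    exact hxy.trans_le (hδ.le.trans (min_le_right _ _))
  have hω : c * max d (d ^ μ) < r₀ := by
    calc c * max d (d ^ μ) < c * (r₀ / (2 * c)) := by gcongr
      _ < r₀ := by field_simp; linarith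
  calc dist (f x) (f y) ≤ L * (c * max d (d ^ μ)) ^ α :=
        dist_le_of_transitive_of_holderOn_ball (ω := fun t => c * max t (t ^ μ)) hL.le hα.le
          hsymm hHolder htrans hω
    _ = L * c ^ α * max d (d ^ μ) ^ α := by
        rw [Real.mul_rpow hc.le (le_max_of_le_left dist_nonneg)]; ring
    _ < L * c ^ α * T := by
        gcongr
        exact (Real.lt_rpow_inv_iff_of_pos (le_max_of_le_left dist_nonneg) hT.le hα).1
          (one_div α ▸ hval)
    _ = ε := by simp only [T]; field_simp

end

theorem uniformly_continuous_of_transitive_holder_general {X Y : Type*}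
    [MetricSpace X] [MetricSpace Y]
    (f : X → Y) (G : Set (X ≃ X)) (c μ : ℝ) (hc : 1 ≤ c) (hμ0 : 0 < μ)
    (hG : ∀ A ∈ G,
      (∀ u v : X, dist (A u) (A v) ≤ c * max (dist u v) (dist u v ^ μ)) ∧
      (∀ u v : X, dist (A.symm u) (A.symm v) ≤ c * max (dist u v) (dist u v ^ μ)))
    (r₀ : ℝ) (hr₀ : 0 < r₀) (x₀ : X) (L : ℝ) (hL : 0 < L)
    (α : ℝ) (hα0 : 0 < α)
    (hHolder : ∀ A ∈ G, ∀ u ∈ Metric.ball x₀ r₀, ∀ v ∈ Metric.ball x₀ r₀,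
      dist (f (A u)) (f (A v)) ≤ L * dist u v ^ α)
    (htrans : ∀ x : X, ∃ A ∈ G, A x₀ = x) :
    (∀ ε > (0 : ℝ), ∃ δ > (0 : ℝ), ∀ x y : X, dist x y < δ → dist (f x) (f y) < ε) ∧
    (∀ ε > (0 : ℝ), ∀ δ : ℝ, 0 < δ →
      δ < min (min (r₀ / (2 * c)) ((r₀ / (2 * c)) ^ (1 / μ)))
              (min ((ε / (L * c ^ α)) ^ (1 / α)) ((ε / (L * c ^ α)) ^ (1 / (α * μ)))) →
      ∀ x y : X, dist x y < δ → dist (f x) (f y) < ε) := by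
  have hc0 : 0 < c := zero_lt_one.trans_le hc
  have hmodulus : ∀ ε > (0 : ℝ), ∀ δ : ℝ, 0 < δ →
      δ < min (min (r₀ / (2 * c)) ((r₀ / (2 * c)) ^ (1 / μ)))
              (min ((ε / (L * c ^ α)) ^ (1 / α)) ((ε / (L * c ^ α)) ^ (1 / (α * μ)))) →
      ∀ x y : X, dist x y < δ → dist (f x) (f y) < ε :=
    fun ε hε _ _ hδ _ _ hxy => dist_lt_of_dist_lt_transitive_holder_modulus hc0 hμ0 hr₀ hL hα0
      hε (fun A hA => (hG A hA).2) hHolder htrans hδ hxy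
  refine ⟨fun ε hε => ?_, hmodulus⟩
  have hM : 0 < min (min (r₀ / (2 * c)) ((r₀ / (2 * c)) ^ (1 / μ)))
      (min ((ε / (L * c ^ α)) ^ (1 / α)) ((ε / (L * c ^ α)) ^ (1 / (α * μ)))) := by
    positivity
  exact ⟨_, half_pos hM, hmodulus ε hε _ (half_pos hM) (half_lt_self hM)⟩

/-- Forward direction of Theorem 1.2(i), abstracted: a transitive family of uniformly
distorted bijections together with a uniform local Hölder bound for `{f ∘ A}` forces
`f` to be uniformly continuous, with an explicit modulus. -/
theorem uniformly_continuous_of_transitive_holder {X Y : Type*}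
    [MetricSpace X] [MetricSpace Y]
    (f : X → Y) (G : Set (X ≃ X)) (c μ : ℝ) (hc : 1 ≤ c) (hμ0 : 0 < μ) (hμ1 : μ ≤ 1)
    (hG : ∀ A ∈ G,
      (∀ u v : X, dist (A u) (A v) ≤ c * max (dist u v) (dist u v ^ μ)) ∧
      (∀ u v : X, dist (A.symm u) (A.symm v) ≤ c * max (dist u v) (dist u v ^ μ)))
    (r₀ : ℝ) (hr₀ : 0 < r₀) (x₀ : X) (L : ℝ) (hL : 0 < L)
    (α : ℝ) (hα0 : 0 < α) (hα1 : α ≤ 1)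
    (hHolder : ∀ A ∈ G, ∀ u ∈ Metric.ball x₀ r₀, ∀ v ∈ Metric.ball x₀ r₀,
      dist (f (A u)) (f (A v)) ≤ L * dist u v ^ α)
    (htrans : ∀ x : X, ∃ A ∈ G, A x₀ = x) :
    (∀ ε > (0 : ℝ), ∃ δ > (0 : ℝ), ∀ x y : X, dist x y < δ → dist (f x) (f y) < ε) ∧
    (∀ ε > (0 : ℝ), ∀ δ : ℝ, 0 < δ →
      δ < min (min (r₀ / (2 * c)) ((r₀ / (2 * c)) ^ (1 / μ)))
              (min ((ε / (L * c ^ α)) ^ (1 / α)) ((ε / (L * c ^ α)) ^ (1 / (α * μ)))) →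
      ∀ x y : X, dist x y < δ → dist (f x) (f y) < ε) :=
  uniformly_continuous_of_transitive_holder_general f G c μ hc hμ0 hG r₀ hr₀ x₀ L hL α hα0 hHolder
    htrans
end
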